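/- arXiv:0809.1902 — 2 statements merged into one kernel-verified Lean document; each statement's English description precedes it below -/
import Mathlib

section
/- Let (X, ρ) be a finite metric space, π a permutation of X, R > 0, and v ∈ X with ρ(π(i), v) < min_{j < i} ρ(π(j), v) for some index i. Then for every point v_t on a shortest path (i.e., any point v_t with ρ(π(i), v_t) + ρ(v_t, v) = ρ(π(i), v)), we also have ρ(π(i), v_t) < min_{j < i} ρ(π(j), v_t). -/
theorem dist_lt_dist_of_dist_add_dist_le {X : Type*} [PseudoMetricSpace X] {c c' v w : X}
    (hcloser : dist c v < dist c' v) (hgeo : dist c w + dist w v ≤ dist c v) :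
    dist c w < dist c' w :=
  lt_of_add_lt_add_right <| calc
    dist c w + dist w v ≤ dist c v := hgeo
    _ < dist c' v := hcloser
    _ ≤ dist c' w + dist w v := dist_triangle c' w v

/-- If `π i` is strictly closer to `v` than every earlier center `π j` (`j < i`), then
`π i` is also strictly closer than every earlier center to any point `vt` lying on a
geodesic from `π i` to `v` (i.e. with `dist (π i) vt + dist vt v = dist (π i) v`). -/
theorem closest_center_on_geodesic {X : Type*} [MetricSpace X]
    (π : ℕ → X) (i : ℕ) (v vt : X)
    (h : ∀ j < i, dist (π i) v < dist (π j) v)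
    (hgeo : dist (π i) vt + dist vt v = dist (π i) v) :
    ∀ j < i, dist (π i) vt < dist (π j) vt :=
  fun j hj => dist_lt_dist_of_dist_add_dist_le (h j hj) hgeo.le
end

section
/- Let (P_{-1}, …, P_K) be a random hierarchical partition of a finite metric space (X, ρ) obtained as the common refinement of independent random partitions Q_{-1}, …, Q_K, where each Q_k is 8^k-bounded and satisfies Pr[B(x, β·8^k) ⊆ Q_k(x)] ≥ (|B(x, 8^k/8)| / |B(x, 8^k)|)^{16β} for all x ∈ X and 0 < β < 1/8. Then for every x ∈ X, Pr[for all k, B(x, β·8^k) ⊆ P_k(x)] ≥ |X|^{-16β}. -/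
/-!
The event that every ball `B(x, β·8^(k-1))` lies in `P_k(x) = ⋂_{ℓ ≥ k} Q_ℓ(x)` is the event that
`B(x, β·8^(k-1)) ⊆ Q_k(x)` for every `k`, since the radii increase with `k`. These events live on
independent factors, so its probability is the product of the single-scale probabilities, each at
least `(|B(x, 8^(k-2))| / |B(x, 8^(k-1))|)^(16β)`. The product of the ratios telescopes to
`|B(x, 8^(-2))| / |B(x, 8^(N-1))| ≥ 1 / |X|`.
-/

open MeasureTheory Finset

lemma prod_range_div_succ {G₀ : Type*} [CommGroupWithZero G₀] (f : ℕ → G₀)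
    (hf : ∀ n, f n ≠ 0) (n : ℕ) : ∏ i ∈ range n, f i / f (i + 1) = f 0 / f n := by
  have := congrArg Units.val (prod_range_div' (fun i => Units.mk0 (f i) (hf i)) n)
  simpa only [Units.coe_prod, Units.val_div_eq_div_val, Units.val_mk0] using this

lemma rpow_neg_le_prod_of_rpow_div_succ_le {N : ℕ} {f : ℕ → ℝ} {p : Fin N → ℝ} {M s : ℝ}
    (hs : 0 ≤ s) (hf : ∀ n, 1 ≤ f n) (hfM : ∀ n, f n ≤ M)
    (hp : ∀ k : Fin N, (f k / f (k + 1)) ^ s ≤ p k) :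
    M ^ (-s) ≤ ∏ k, p k := by
  have hf₀ (n : ℕ) : 0 < f n := one_pos.trans_le (hf n)
  have hM : 0 < M := (hf₀ 0).trans_le (hfM 0)
  have hdiv₀ (n : ℕ) : 0 ≤ f n / f (n + 1) := (div_pos (hf₀ n) (hf₀ (n + 1))).le
  have hratio : M⁻¹ ≤ f 0 / f N :=
    calc M⁻¹ ≤ (f N)⁻¹ := inv_anti₀ (hf₀ N) (hfM N)
      _ ≤ f 0 / f N := by
        rw [inv_eq_one_div]; exact div_le_div_of_nonneg_right (hf 0) (hf₀ N).le
  calc M ^ (-s) = M⁻¹ ^ s := by rw [Real.rpow_neg hM.le, Real.inv_rpow hM.le]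
    _ ≤ (f 0 / f N) ^ s := by gcongr
    _ = ∏ k : Fin N, (f k / f (k + 1)) ^ s := by
      rw [Real.finsetProd_rpow _ (fun k : Fin N => f k / f (k + 1)) fun k _ => hdiv₀ k,
        Fin.prod_univ_eq_prod_range (fun i => f i / f (i + 1)),
        prod_range_div_succ f fun n => (hf₀ n).ne']
    _ ≤ ∏ k, p k := prod_le_prod (fun k _ => Real.rpow_nonneg (hdiv₀ k) s) fun k _ => hp k

lemma setOf_forall_dist_le_mem_iInter_eq_pi {X ι : Type*} [PseudoMetricSpace X] [Preorder ι]
    {Ω : ι → Type*} (Q : ∀ k, Ω k → X → Set X) (x : X) {r : ι → ℝ} (hr : Monotone r) :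
    {ω : ∀ k, Ω k | ∀ k, ∀ y, dist x y ≤ r k → y ∈ ⋂ ℓ ∈ {ℓ | k ≤ ℓ}, Q ℓ (ω ℓ) x}
      = Set.univ.pi fun k => {ω | ∀ y, dist x y ≤ r k → y ∈ Q k ω x} := by
  ext ω
  simp only [Set.mem_ofPred_eq, Set.mem_iInter, Set.mem_pi, Set.mem_univ, true_imp_iff]
  exact ⟨fun h ℓ y hy => h ℓ y hy ℓ le_rfl,
    fun h k y hy ℓ hkℓ => h ℓ y (hy.trans (hr hkℓ))⟩

lemma one_le_natCard_setOf_dist_le {X : Type*} [PseudoMetricSpace X] [Finite X] (x : X)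
    {r : ℝ} (hr : 0 ≤ r) : 1 ≤ Nat.card {y : X | dist x y ≤ r} :=
  have : Nonempty {y : X | dist x y ≤ r} := ⟨⟨x, by simpa using hr⟩⟩
  Nat.card_pos

theorem hierarchical_padding_general {X : Type*} [MetricSpace X] [Fintype X]
    (N : ℕ)
    (Ω : Fin N → Type*) [∀ k, MeasurableSpace (Ω k)]
    (μ : ∀ k, Measure (Ω k)) [∀ k, IsProbabilityMeasure (μ k)]
    (Q : ∀ k : Fin N, Ω k → X → Set X)
    (β : ℝ) (hβ : 0 < β)
    (x : X)
    (hpad : ∀ k : Fin N,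
      ((Nat.card {y : X | dist x y ≤ (8 : ℝ) ^ ((k : ℤ) - 1) / 8} : ℝ)
          / (Nat.card {y : X | dist x y ≤ (8 : ℝ) ^ ((k : ℤ) - 1)} : ℝ)) ^ (16 * β)
        ≤ (μ k {ω : Ω k | ∀ y : X, dist x y ≤ β * (8 : ℝ) ^ ((k : ℤ) - 1) →
            y ∈ Q k ω x}).toReal) :
    ((Fintype.card X : ℝ)) ^ (-(16 * β))
      ≤ ((Measure.pi μ) {ω : ∀ k, Ω k | ∀ k : Fin N, ∀ y : X,
          dist x y ≤ β * (8 : ℝ) ^ ((k : ℤ) - 1) →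
            y ∈ ⋂ ℓ ∈ {ℓ : Fin N | k ≤ ℓ}, Q ℓ (ω ℓ) x}).toReal := by
  have hr : Monotone fun k : Fin N => β * (8 : ℝ) ^ ((k : ℤ) - 1) := fun k ℓ hkℓ => by
    dsimp only
    gcongr
    · norm_num
    · exact_mod_cast hkℓ
  rw [setOf_forall_dist_le_mem_iInter_eq_pi Q x hr, Measure.pi_pi, ENNReal.toReal_prod]
  refine rpow_neg_le_prod_of_rpow_div_succ_le (f := fun n : ℕ =>
      (Nat.card {y : X | dist x y ≤ (8 : ℝ) ^ ((n : ℤ) - 2)} : ℝ)) (by positivity)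
    (fun n => mod_cast one_le_natCard_setOf_dist_le x (by positivity))
    (fun n => mod_cast (Finite.card_subtype_le _).trans_eq Nat.card_eq_fintype_card) fun k => ?_
  have hsmall : (8 : ℝ) ^ ((k : ℕ) - 2 : ℤ) = (8 : ℝ) ^ ((k : ℤ) - 1) / 8 := by
    rw [div_eq_mul_inv, ← zpow_sub_one₀ (by norm_num : (8 : ℝ) ≠ 0)]
    ring_nf
  have hlarge : (((k : ℕ) + 1 : ℕ) : ℤ) - 2 = (k : ℤ) - 1 := by push_cast; ring
  simpa only [hsmall, hlarge] using hpad k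

/-- Padding probability of hierarchical CKR partitions (Lemma 3).  Independent random
partitions `Q_k` (one per scale `8^{k-1}`, `k : Fin N`, modeled on independent probability
spaces `Ω k` with the product measure) are `8^{k-1}`-bounded and satisfy the CKR padding
bound `Pr[B(x, β·8^{k-1}) ⊆ Q_k(x)] ≥ (|B(x, 8^{k-1}/8)|/|B(x, 8^{k-1})|)^{16β}`.
Then the common refinement `P_k(x) = ⋂_{ℓ ≥ k} Q_ℓ(x)` satisfies
`Pr[∀ k, B(x, β·8^{k-1}) ⊆ P_k(x)] ≥ |X|^{-16β}`. -/
theorem hierarchical_padding {X : Type*} [MetricSpace X] [Fintype X]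
    (N : ℕ)
    (Ω : Fin N → Type*) [∀ k, MeasurableSpace (Ω k)]
    (μ : ∀ k, Measure (Ω k)) [∀ k, IsProbabilityMeasure (μ k)]
    (Q : ∀ k : Fin N, Ω k → X → Set X)
    (β : ℝ) (hβ : 0 < β) (hβ' : β < 1 / 8)
    (x : X)
    (hbounded : ∀ (k : Fin N) (ω : Ω k) (y : X), ∀ a ∈ Q k ω y, ∀ b ∈ Q k ω y,
      dist a b ≤ (8 : ℝ) ^ ((k : ℤ) - 1))
    (hpad : ∀ k : Fin N,
      ((Nat.card {y : X | dist x y ≤ (8 : ℝ) ^ ((k : ℤ) - 1) / 8} : ℝ)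
          / (Nat.card {y : X | dist x y ≤ (8 : ℝ) ^ ((k : ℤ) - 1)} : ℝ)) ^ (16 * β)
        ≤ (μ k {ω : Ω k | ∀ y : X, dist x y ≤ β * (8 : ℝ) ^ ((k : ℤ) - 1) →
            y ∈ Q k ω x}).toReal) :
    ((Fintype.card X : ℝ)) ^ (-(16 * β))
      ≤ ((Measure.pi μ) {ω : ∀ k, Ω k | ∀ k : Fin N, ∀ y : X,
          dist x y ≤ β * (8 : ℝ) ^ ((k : ℤ) - 1) →
            y ∈ ⋂ ℓ ∈ {ℓ : Fin N | k ≤ ℓ}, Q ℓ (ω ℓ) x}).toReal :=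
  hierarchical_padding_general N Ω μ Q β hβ x hpad
end
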